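/- Let β : {±1}^m → {−1,+1} with Fourier coefficients β̂(S), and suppose ∑_S β̂(S)² (1−2ε)^{|S|} ≥ 1 − bε^t for constants b > 0, 1/2 < t < 1, 0 < ε < 1/2. Then ∑_{S : |S| ≥ ε^{-1}} β̂(S)² < (b/(1−e^{-2})) ε^t. -/
import Mathlib


noncomputable def sgn (b : Bool) : ℝ := if b then -1 else 1

noncomputable def chi {m : ℕ} (S : Finset (Fin m)) (x : Fin m → Bool) : ℝ :=
  ∏ a ∈ S, sgn (x a)

noncomputable def fhat {m : ℕ} (f : (Fin m → Bool) → ℝ) (S : Finset (Fin m)) : ℝ :=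
  ((2 : ℝ) ^ m)⁻¹ * ∑ x : Fin m → Bool, chi S x * f x

lemma chi_sum_key {m : ℕ} (x y : Fin m → Bool) :
    ∑ S : Finset (Fin m), chi S x * chi S y = if x = y then (2 : ℝ) ^ m else 0 := by
  have h1 : ∀ S : Finset (Fin m), chi S x * chi S y
      = (∏ a ∈ S, sgn (x a) * sgn (y a)) * ∏ a ∈ Finset.univ \ S, (1 : ℝ) := by
    intro S; simp [chi, Finset.prod_mul_distrib]
  simp_rw [h1]
  have h2 := (Finset.prod_add (fun a : Fin m => sgn (x a) * sgn (y a))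
      (fun _ => (1 : ℝ)) Finset.univ).symm
  rw [Finset.powerset_univ] at h2
  rw [h2]
  by_cases hxy : x = y
  · subst hxy
    have : ∀ a : Fin m, sgn (x a) * sgn (x a) + 1 = 2 := by
      intro a; cases x a <;> simp [sgn] <;> ring
    simp [this]
  · simp only [hxy, if_false]
    obtain ⟨a, ha⟩ := Function.ne_iff.mp hxy
    apply Finset.prod_eq_zero (Finset.mem_univ a)
    cases hx : x a <;> cases hy : y a <;> simp_all [sgn]

lemma parseval {m : ℕ} (β : (Fin m → Bool) → ℝ) (hβ : ∀ x, β x = 1 ∨ β x = -1) :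
    ∑ S : Finset (Fin m), fhat β S ^ 2 = 1 := by
  have hcard : (Fintype.card (Fin m → Bool) : ℝ) = 2 ^ m := by
    simp [Fintype.card_fun]
  have hβ2 : ∀ x, β x ^ 2 = 1 := by
    intro x; rcases hβ x with h | h <;> rw [h] <;> ring
  have expand : ∀ S : Finset (Fin m), fhat β S ^ 2
      = ((2:ℝ)^m)⁻¹ * ((2:ℝ)^m)⁻¹ * ∑ x : Fin m → Bool, ∑ y : Fin m → Bool,
          β x * β y * (chi S x * chi S y) := by
    intro S
    rw [fhat, sq, mul_mul_mul_comm, Finset.sum_mul_sum]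
    congr 1
    apply Finset.sum_congr rfl; intro x _
    apply Finset.sum_congr rfl; intro y _
    ring
  have e1 : ∑ S : Finset (Fin m), fhat β S ^ 2
      = ((2:ℝ)^m)⁻¹ * ((2:ℝ)^m)⁻¹ * ∑ S : Finset (Fin m), ∑ x : Fin m → Bool,
          ∑ y : Fin m → Bool, β x * β y * (chi S x * chi S y) := by
    rw [Finset.mul_sum]
    exact Finset.sum_congr rfl fun S _ => expand S
  have e2 : ∑ S : Finset (Fin m), ∑ x : Fin m → Bool, ∑ y : Fin m → Bool,
        β x * β y * (chi S x * chi S y)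
      = ∑ x : Fin m → Bool, ∑ y : Fin m → Bool, ∑ S : Finset (Fin m),
        β x * β y * (chi S x * chi S y) := by
    rw [Finset.sum_comm]
    exact Finset.sum_congr rfl fun x _ => Finset.sum_comm
  have e3 : ∀ x y : Fin m → Bool, ∑ S : Finset (Fin m), β x * β y * (chi S x * chi S y)
      = β x * β y * (if x = y then (2:ℝ)^m else 0) := by
    intro x y
    rw [← Finset.mul_sum, chi_sum_key]
  have e4 : ∀ x : Fin m → Bool,
      ∑ y : Fin m → Bool, β x * β y * (if x = y then (2:ℝ)^m else 0) = 2 ^ m := by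
    intro x
    rw [Finset.sum_eq_single x]
    · rw [if_pos rfl, ← sq, hβ2, one_mul]
    · intro y _ hy; rw [if_neg (Ne.symm hy), mul_zero]
    · intro h; exact absurd (Finset.mem_univ x) h
  rw [e1, e2]
  simp_rw [e3, e4]
  rw [Finset.sum_const, Finset.card_univ, nsmul_eq_mul, hcard]
  have h2m : (2:ℝ)^m ≠ 0 := by positivity
  field_simp

/-- if `∑_S β̂(S)² (1−2ε)^{|S|} ≥ 1 − bε^t` for a Boolean function `β`, then the
Fourier weight above degree `ε⁻¹` is small: `∑_{|S| ≥ ε⁻¹} β̂(S)² < (b/(1−e⁻²)) ε^t`. -/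
theorem high_degree_weight_small {m : ℕ} (b t ε : ℝ)
    (hb : 0 < b) (ht1 : 1 / 2 < t) (ht2 : t < 1) (hε0 : 0 < ε) (hε1 : ε < 1 / 2)
    (β : (Fin m → Bool) → ℝ) (hβ : ∀ x, β x = 1 ∨ β x = -1)
    (hyp : 1 - b * ε ^ t ≤ ∑ S : Finset (Fin m), (fhat β S) ^ 2 * (1 - 2 * ε) ^ S.card) :
    ∑ S ∈ Finset.univ.filter (fun S : Finset (Fin m) => ε⁻¹ ≤ (S.card : ℝ)),
        (fhat β S) ^ 2
      < (b / (1 - Real.exp (-2))) * ε ^ t := by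
  classical
  have hεpos : 0 < ε ^ t := Real.rpow_pos_of_pos hε0 t
  have he2 : Real.exp (-2) < 1 := by
    rw [Real.exp_lt_one_iff]; norm_num
  have he2pos : 0 < 1 - Real.exp (-2) := by linarith
  have hone : 0 ≤ 1 - 2 * ε := by linarith
  have hfac : ∀ n : ℕ, ε⁻¹ ≤ (n : ℝ) → (1 - 2 * ε) ^ n < Real.exp (-2) := by
    intro n hn
    have hn0 : n ≠ 0 := by
      rintro rfl
      simp only [Nat.cast_zero] at hn
      exact absurd hn (not_le.mpr (inv_pos.mpr hε0))
    have hlt : 1 - 2 * ε < Real.exp (-(2 * ε)) := by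
      have := Real.add_one_lt_exp (x := -(2 * ε)) (ne_of_lt (by linarith))
      linarith
    calc (1 - 2 * ε) ^ n < Real.exp (-(2 * ε)) ^ n :=
          pow_lt_pow_left₀ hlt hone hn0
      _ = Real.exp (-(2 * ε) * n) := by rw [← Real.exp_nat_mul]; ring_nf
      _ ≤ Real.exp (-2) := by
          apply Real.exp_le_exp.mpr
          have h1 : (1:ℝ) ≤ ε * n := by
            calc (1:ℝ) = ε * ε⁻¹ := by field_simp
              _ ≤ ε * n := mul_le_mul_of_nonneg_left hn hε0.le
          nlinarith
  set H := ∑ S ∈ Finset.univ.filter (fun S : Finset (Fin m) => ε⁻¹ ≤ (S.card : ℝ)),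
      (fhat β S) ^ 2 with hH
  have hHnonneg : 0 ≤ H := Finset.sum_nonneg fun S _ => sq_nonneg _
  by_cases hH0 : H = 0
  · rw [hH0]; positivity
  · have hHpos : 0 < H := lt_of_le_of_ne hHnonneg (Ne.symm hH0)
    have hhigh : ∑ S ∈ Finset.univ.filter (fun S : Finset (Fin m) => ε⁻¹ ≤ (S.card : ℝ)),
        (fhat β S) ^ 2 * (1 - 2 * ε) ^ S.card < Real.exp (-2) * H := by
      obtain ⟨S0, hS0P, hS0⟩ := Finset.exists_ne_zero_of_sum_ne_zero (hH ▸ hH0)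
      rw [hH, Finset.mul_sum]
      apply Finset.sum_lt_sum
      · intro S hS
        have hSc : ε⁻¹ ≤ (S.card : ℝ) := (Finset.mem_filter.mp hS).2
        calc (fhat β S) ^ 2 * (1 - 2 * ε) ^ S.card
            ≤ (fhat β S) ^ 2 * Real.exp (-2) :=
              mul_le_mul_of_nonneg_left (hfac _ hSc).le (sq_nonneg _)
          _ = Real.exp (-2) * (fhat β S) ^ 2 := mul_comm _ _
      · refine ⟨S0, hS0P, ?_⟩
        have hSc : ε⁻¹ ≤ (S0.card : ℝ) := (Finset.mem_filter.mp hS0P).2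
        have hpos : 0 < (fhat β S0) ^ 2 := lt_of_le_of_ne (sq_nonneg _) (Ne.symm hS0)
        calc (fhat β S0) ^ 2 * (1 - 2 * ε) ^ S0.card
            < (fhat β S0) ^ 2 * Real.exp (-2) :=
              mul_lt_mul_of_pos_left (hfac _ hSc) hpos
          _ = Real.exp (-2) * (fhat β S0) ^ 2 := mul_comm _ _
    have hlow : ∑ S ∈ Finset.univ.filter (fun S : Finset (Fin m) =>
          ¬ ε⁻¹ ≤ (S.card : ℝ)), (fhat β S) ^ 2 * (1 - 2 * ε) ^ S.card
        ≤ ∑ S ∈ Finset.univ.filter (fun S : Finset (Fin m) =>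
          ¬ ε⁻¹ ≤ (S.card : ℝ)), (fhat β S) ^ 2 := by
      apply Finset.sum_le_sum
      intro S _
      have h1 : (1 - 2 * ε) ^ S.card ≤ 1 := pow_le_one₀ hone (by linarith)
      nlinarith [sq_nonneg (fhat β S)]
    have hsplit := Finset.sum_filter_add_sum_filter_not Finset.univ
      (fun S : Finset (Fin m) => ε⁻¹ ≤ (S.card : ℝ))
      (fun S => (fhat β S) ^ 2 * (1 - 2 * ε) ^ S.card)
    have hsplit2 := Finset.sum_filter_add_sum_filter_not Finset.univ
      (fun S : Finset (Fin m) => ε⁻¹ ≤ (S.card : ℝ))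
      (fun S => (fhat β S) ^ 2)
    have hpar := parseval β hβ
    have hlowsum : ∑ S ∈ Finset.univ.filter (fun S : Finset (Fin m) =>
        ¬ ε⁻¹ ≤ (S.card : ℝ)), (fhat β S) ^ 2 = 1 - H := by
      rw [hH]; linarith [hsplit2, hpar]
    have hcomb : 1 - b * ε ^ t < Real.exp (-2) * H + (1 - H) := by
      calc 1 - b * ε ^ t
          ≤ ∑ S : Finset (Fin m), (fhat β S) ^ 2 * (1 - 2 * ε) ^ S.card := hyp
        _ = (∑ S ∈ Finset.univ.filter (fun S : Finset (Fin m) => ε⁻¹ ≤ (S.card : ℝ)),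
              (fhat β S) ^ 2 * (1 - 2 * ε) ^ S.card)
            + ∑ S ∈ Finset.univ.filter (fun S : Finset (Fin m) =>
              ¬ ε⁻¹ ≤ (S.card : ℝ)), (fhat β S) ^ 2 * (1 - 2 * ε) ^ S.card := hsplit.symm
        _ < Real.exp (-2) * H + (1 - H) := by
            linarith [hhigh, hlow, hlowsum]
    rw [div_mul_eq_mul_div, lt_div_iff₀ he2pos]
    nlinarith [hcomb]
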